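/- arXiv:2310.01104 — 3 statements merged into one kernel-verified Lean document; each statement's English description precedes it below -/
import Mathlib

section
/- Let w : (0,∞) → ℝ and w₂ : (0,∞)×(0,∞) → ℝ be measurable with the product w(k₁)w₂(k₂,k₁)C(k₂) integrable on the relevant domains. If C(S,t,k₁,u₁) = ∫₀^∞ w₂(k₂,k₁) C(S,t,k₂,u₂) dk₂ for every k₁ > 0, and C(S,t,K,T) = ∫₀^∞ w(k₁) C(S,t,k₁,u₁) dk₁, then for any 0 ≤ K₁₁ ≤ K₁₂, C(S,t,K,T) = ∫_{K₁₁}^{K₁₂} w(k₁) C(S,t,k₁,u₁) dk₁ + ∫₀^∞ w̃₂(k₂) C(S,t,k₂,u₂) dk₂, where w̃₂(k₂) = ∫₀^{K₁₁} w(k₁) w₂(k₂,k₁) dk₁ + ∫_{K₁₂}^∞ w(k₁) w₂(k₂,k₁) dk₁. -/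
/-!
Split the `u₁`-strikes `(0, ∞)` at `K₁₁` and `K₁₂`. On the two outer pieces replace each
`u₁`-call by its spanning integral over `u₂`-calls and exchange the order of integration
(Fubini); the two resulting `u₂`-integrals add up to the one against `wt₂`.
-/

open MeasureTheory Set

section Spanning

variable {α β : Type*} [MeasurableSpace α] [MeasurableSpace β] {μ : Measure α} {ν : Measure β}
  [SFinite μ] [SFinite ν] {w : α → ℝ} {k : β → α → ℝ} {h : β → ℝ} {A : Set α} {B : Set β}

theorem integrableOn_setIntegral_mul_mul
    (hint : IntegrableOn (fun p : α × β => w p.1 * k p.2 p.1 * h p.2) (A ×ˢ B) (μ.prod ν)) :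
    IntegrableOn (fun y => (∫ x in A, w x * k y x ∂μ) * h y) B ν := by
  rw [IntegrableOn, ← Measure.prod_restrict] at hint
  refine hint.integral_prod_right.congr (Filter.Eventually.of_forall fun y => ?_)
  exact integral_mul_const (h y) _

theorem setIntegral_mul_eq_setIntegral_of_span {g : α → ℝ} (hA : MeasurableSet A)
    (hspan : ∀ x ∈ A, g x = ∫ y in B, k y x * h y ∂ν)
    (hint : IntegrableOn (fun p : α × β => w p.1 * k p.2 p.1 * h p.2) (A ×ˢ B) (μ.prod ν)) :
    ∫ x in A, w x * g x ∂μ = ∫ y in B, (∫ x in A, w x * k y x ∂μ) * h y ∂ν := by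
  rw [IntegrableOn, ← Measure.prod_restrict] at hint
  calc ∫ x in A, w x * g x ∂μ
      = ∫ x in A, ∫ y in B, w x * k y x * h y ∂ν ∂μ := by
        refine setIntegral_congr_fun hA fun x hx => ?_
        simp only [hspan x hx, ← integral_const_mul, mul_assoc]
    _ = ∫ y in B, ∫ x in A, w x * k y x * h y ∂μ ∂ν := integral_integral_swap hint
    _ = ∫ y in B, (∫ x in A, w x * k y x ∂μ) * h y ∂ν := by
        simp only [integral_mul_const]

end Spanning

theorem setIntegral_Ioi_eq_Ioo_add_Ioc_add_Ioi {E : Type*} [NormedAddCommGroup E]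
    [NormedSpace ℝ E] {μ : Measure ℝ} [NullSingletonClass μ] {f : ℝ → E} {c a b : ℝ} (hca : c ≤ a)
    (hab : a ≤ b) (hf : IntegrableOn f (Ioi c) μ) :
    ∫ x in Ioi c, f x ∂μ =
      (∫ x in Ioo c a, f x ∂μ) + (∫ x in Ioc a b, f x ∂μ) + ∫ x in Ioi b, f x ∂μ := by
  have hcb : c ≤ b := hca.trans hab
  have hf_cb : IntegrableOn f (Ioc c b) μ := hf.mono_set Ioc_subset_Ioi_self
  rw [← Ioc_union_Ioi_eq_Ioi hcb, setIntegral_union (Ioc_disjoint_Ioi le_rfl) measurableSet_Ioi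
      hf_cb (hf.mono_set (Ioi_subset_Ioi hcb)),
    ← Ioc_union_Ioc_eq_Ioc hca hab, setIntegral_union (Ioc_disjoint_Ioc_of_le le_rfl)
      measurableSet_Ioc (hf_cb.mono_set (Ioc_subset_Ioc_right hab))
      (hf_cb.mono_set (Ioc_subset_Ioc_left hca)), integral_Ioc_eq_integral_Ioo]

/-- `Cu1 k₁ = C(S,t,k₁,u₁)`, `Cu2 k₂ = C(S,t,k₂,u₂)` and `CT = C(S,t,K,T)`. -/
theorem two_maturity_spanning_general
    (w : ℝ → ℝ) (w₂ : ℝ → ℝ → ℝ) (Cu1 Cu2 : ℝ → ℝ) (CT : ℝ)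
    (hspan₂ : ∀ k₁ > 0, Cu1 k₁ = ∫ k₂ in Ioi (0 : ℝ), w₂ k₂ k₁ * Cu2 k₂)
    (hspan₁ : CT = ∫ k₁ in Ioi (0 : ℝ), w k₁ * Cu1 k₁)
    (K₁₁ K₁₂ : ℝ) (h0 : 0 ≤ K₁₁) (h12 : K₁₁ ≤ K₁₂)
    (hint₁ : IntegrableOn (fun k₁ => w k₁ * Cu1 k₁) (Ioi (0 : ℝ)))
    (hint : IntegrableOn (fun p : ℝ × ℝ => w p.1 * w₂ p.2 p.1 * Cu2 p.2)
      ((Ioi (0 : ℝ)) ×ˢ (Ioi (0 : ℝ))))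
    (wt₂ : ℝ → ℝ)
    (hwt₂ : ∀ k₂, wt₂ k₂ =
      (∫ k₁ in Ioo (0 : ℝ) K₁₁, w k₁ * w₂ k₂ k₁) +
        ∫ k₁ in Ioi K₁₂, w k₁ * w₂ k₂ k₁) :
    CT = (∫ k₁ in Ioc K₁₁ K₁₂, w k₁ * Cu1 k₁) +
      ∫ k₂ in Ioi (0 : ℝ), wt₂ k₂ * Cu2 k₂ := by
  rw [Measure.volume_eq_prod] at hint
  have hint_low :=
    hint.mono_set (prod_mono_left (Ioo_subset_Ioi_self : Ioo (0 : ℝ) K₁₁ ⊆ Ioi 0))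
  have hint_high := hint.mono_set (prod_mono_left (Ioi_subset_Ioi (h0.trans h12)))
  have hspan_low := setIntegral_mul_eq_setIntegral_of_span measurableSet_Ioo
    (fun k₁ hk₁ => hspan₂ k₁ hk₁.1) hint_low
  have hspan_high := setIntegral_mul_eq_setIntegral_of_span measurableSet_Ioi
    (fun k₁ hk₁ => hspan₂ k₁ ((h0.trans h12).trans_lt hk₁)) hint_high
  simp only [hwt₂, add_mul]
  rw [hspan₁, setIntegral_Ioi_eq_Ioo_add_Ioc_add_Ioi h0 h12 hint₁, hspan_low, hspan_high,
    integral_add (integrableOn_setIntegral_mul_mul hint_low)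
      (integrableOn_setIntegral_mul_mul hint_high)]
  ring

/-- **Two-maturity static spanning (Theorem 2 of the paper).** If the call with maturity `u₁`
is spanned by calls with the shorter maturity `u₂`, and the target call is spanned by calls
with maturity `u₁`, then for any strike interval `[K₁₁, K₁₂]`, the target price decomposes
into an integral of `u₁`-calls over `[K₁₁,K₁₂]` plus an integral of `u₂`-calls against the
modified weight `wt₂`. Here `Cu1 k₁ = C(S,t,k₁,u₁)`, `Cu2 k₂ = C(S,t,k₂,u₂)` and
`CT = C(S,t,K,T)`. -/
theorem two_maturity_spanning
    (w : ℝ → ℝ) (w₂ : ℝ → ℝ → ℝ) (Cu1 Cu2 : ℝ → ℝ) (CT : ℝ)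
    (hw_meas : Measurable w) (hw₂_meas : Measurable (fun p : ℝ × ℝ => w₂ p.1 p.2))
    (hCu2_meas : Measurable Cu2)
    (hspan₂ : ∀ k₁ > 0, Cu1 k₁ = ∫ k₂ in Ioi (0 : ℝ), w₂ k₂ k₁ * Cu2 k₂)
    (hspan₁ : CT = ∫ k₁ in Ioi (0 : ℝ), w k₁ * Cu1 k₁)
    (K₁₁ K₁₂ : ℝ) (h0 : 0 ≤ K₁₁) (h12 : K₁₁ ≤ K₁₂)
    (hint₁ : IntegrableOn (fun k₁ => w k₁ * Cu1 k₁) (Ioi (0 : ℝ)))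
    (hint : IntegrableOn (fun p : ℝ × ℝ => w p.1 * w₂ p.2 p.1 * Cu2 p.2)
      ((Ioi (0 : ℝ)) ×ˢ (Ioi (0 : ℝ))))
    (wt₂ : ℝ → ℝ)
    (hwt₂ : ∀ k₂, wt₂ k₂ =
      (∫ k₁ in Ioo (0 : ℝ) K₁₁, w k₁ * w₂ k₂ k₁) +
        ∫ k₁ in Ioi K₁₂, w k₁ * w₂ k₂ k₁) :
    CT = (∫ k₁ in Ioc K₁₁ K₁₂, w k₁ * Cu1 k₁) +
      ∫ k₂ in Ioi (0 : ℝ), wt₂ k₂ * Cu2 k₂ :=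
  two_maturity_spanning_general w w₂ Cu1 Cu2 CT hspan₂ hspan₁ K₁₁ K₁₂ h0 h12 hint₁ hint wt₂ hwt₂
end

section
/- Iterated spanning (Corollary): if for each i = 2,…,n, C(S,t,k,u_{i−1}) = ∫₀^∞ w_i(k', k) C(S,t,k',u_i) dk' for all k > 0, and C(S,t,K,T) = ∫₀^∞ w(k₁)C(S,t,k₁,u₁)dk₁, then C(S,t,K,T) = Σ_{i=1}^{n−1} ∫_{K_{i,1}}^{K_{i,2}} w̃_i(k_i) C(S,t,k_i,u_i) dk_i + ∫₀^∞ w̃_n(k_n) C(S,t,k_n,u_n) dk_n, where w̃₁ = w and w̃_i(k_i) = ∫_{(0,K_{i−1,1})∪(K_{i−1,2},∞)} w̃_{i−1}(k_{i−1}) w_i(k_i,k_{i−1}) dk_{i−1} for i ≥ 2, assuming all functions are nonnegative and all iterated integrals finite. -/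
open MeasureTheory Set

/-!
Integrate the single-step spanning relation `C_{i-1}(k) = ∫ w_i(k', k) C_i(k') dk'` against
`w̃_{i-1}` over the strikes outside `[K_{i-1,1}, K_{i-1,2}]` and exchange the order of
integration (Fubini): the result is `∫ w̃_i C_i`. Hence
`∫₀^∞ w̃_{i-1} C_{i-1} = ∫_{K_{i-1,1}}^{K_{i-1,2}} w̃_{i-1} C_{i-1} + ∫₀^∞ w̃_i C_i`
(the point `K_{i-1,1}` is null),
and telescoping from `CT = ∫₀^∞ w̃₁ C₁` gives the decomposition.
-/

section Spanning

variable {α β : Type*} [MeasurableSpace α] [MeasurableSpace β]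
  {μ : Measure α} {ν : Measure β} [SFinite μ] [SFinite ν]
  {g : α → ℝ} {W : β → α → ℝ} {C' : β → ℝ}

theorem integrable_integral_mul_of_integrable_prod
    (h : Integrable (fun p : α × β => g p.1 * W p.2 p.1 * C' p.2) (μ.prod ν)) :
    Integrable (fun k' => (∫ k, g k * W k' k ∂μ) * C' k') ν := by
  simpa only [integral_mul_const] using h.integral_prod_right

theorem integral_mul_eq_integral_of_span {C : α → ℝ}
    (h : Integrable (fun p : α × β => g p.1 * W p.2 p.1 * C' p.2) (μ.prod ν))
    (hspan : ∀ᵐ k ∂μ, C k = ∫ k', W k' k * C' k' ∂ν) :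
    ∫ k, g k * C k ∂μ = ∫ k', (∫ k, g k * W k' k ∂μ) * C' k' ∂ν := calc
  ∫ k, g k * C k ∂μ = ∫ k, ∫ k', g k * W k' k * C' k' ∂ν ∂μ := by
    refine integral_congr_ae (hspan.mono fun k hk => ?_)
    simp only [hk, ← integral_const_mul, mul_assoc]
  _ = ∫ k', ∫ k, g k * W k' k * C' k' ∂μ ∂ν := integral_integral_swap h
  _ = ∫ k', (∫ k, g k * W k' k ∂μ) * C' k' ∂ν := by simp only [integral_mul_const]

end Spanning

theorem integral_Ioi_eq_Ioo_add_Ioc_add_Ioi {μ : Measure ℝ} [NullSingletonClass μ]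
    {f : ℝ → ℝ} {c a b : ℝ} (hca : c ≤ a) (hab : a ≤ b)
    (hf : IntegrableOn f (Ioi c) μ) :
    ∫ k in Ioi c, f k ∂μ =
      (∫ k in Ioo c a, f k ∂μ) + (∫ k in Ioc a b, f k ∂μ) +
        ∫ k in Ioi b, f k ∂μ := by
  rw [← Ioc_union_Ioi_eq_Ioi (hca.trans hab),
    setIntegral_union (Ioc_disjoint_Ioi le_rfl) measurableSet_Ioi
      (hf.mono_set Ioc_subset_Ioi_self)
      (hf.mono_set (Ioi_subset_Ioi (hca.trans hab))),
    ← Ioc_union_Ioc_eq_Ioc hca hab,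
    setIntegral_union (Ioc_disjoint_Ioc_of_le le_rfl) measurableSet_Ioc
      (hf.mono_set Ioc_subset_Ioi_self) (hf.mono_set fun x hx => hca.trans_lt hx.1),
    integral_Ioc_eq_integral_Ioo]

theorem setIntegral_mul_eq_integral_of_span {S : Set ℝ} (hS : MeasurableSet S)
    (hS0 : S ⊆ Ioi 0) {g C C' : ℝ → ℝ} {W : ℝ → ℝ → ℝ}
    (hint : IntegrableOn (fun p : ℝ × ℝ => g p.1 * W p.2 p.1 * C' p.2) (Ioi 0 ×ˢ Ioi 0))
    (hspan : ∀ k > 0, C k = ∫ k' in Ioi 0, W k' k * C' k') :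
    (∫ k in S, g k * C k = ∫ k' in Ioi 0, (∫ k in S, g k * W k' k) * C' k') ∧
      IntegrableOn (fun k' => (∫ k in S, g k * W k' k) * C' k') (Ioi 0) := by
  have hint_S : Integrable (fun p : ℝ × ℝ => g p.1 * W p.2 p.1 * C' p.2)
      ((volume.restrict S).prod (volume.restrict (Ioi 0))) := by
    rw [Measure.prod_restrict, ← Measure.volume_eq_prod]
    exact hint.mono_set (prod_mono hS0 subset_rfl)
  exact ⟨integral_mul_eq_integral_of_span hint_S
      ((ae_restrict_iff' hS).2 (ae_of_all _ fun k hk => hspan k (hS0 hk))),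
    integrable_integral_mul_of_integrable_prod hint_S⟩

theorem integral_Ioi_eq_integral_Ioc_add_of_span {a b : ℝ} (ha : 0 < a) (hab : a ≤ b)
    {g g' C C' : ℝ → ℝ} {W : ℝ → ℝ → ℝ}
    (hg' : ∀ k, g' k = (∫ k' in Ioo 0 a, g k' * W k k') + ∫ k' in Ioi b, g k' * W k k')
    (hspan : ∀ k > 0, C k = ∫ k' in Ioi 0, W k' k * C' k')
    (hint : IntegrableOn (fun k => g k * C k) (Ioi 0))
    (hint₂ : IntegrableOn (fun p : ℝ × ℝ => g p.1 * W p.2 p.1 * C' p.2) (Ioi 0 ×ˢ Ioi 0)) :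
    ∫ k in Ioi 0, g k * C k = (∫ k in Ioc a b, g k * C k) + ∫ k in Ioi 0, g' k * C' k := by
  obtain ⟨hlow, hlow_int⟩ := setIntegral_mul_eq_integral_of_span
    (measurableSet_Ioo (a := 0) (b := a)) Ioo_subset_Ioi_self hint₂ hspan
  obtain ⟨hhigh, hhigh_int⟩ := setIntegral_mul_eq_integral_of_span measurableSet_Ioi
    (Ioi_subset_Ioi (ha.le.trans hab)) hint₂ hspan
  have hg'C : ∫ k in Ioi 0, g' k * C' k =
      (∫ k in Ioo 0 a, g k * C k) + ∫ k in Ioi b, g k * C k := by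
    simp only [hlow, hhigh, hg', add_mul]
    exact integral_add hlow_int hhigh_int
  rw [integral_Ioi_eq_Ioo_add_Ioc_add_Ioi ha.le hab hint, hg'C]
  ring

theorem iterated_spanning_general
    (n : ℕ) (hn : 2 ≤ n)
    (Cu : ℕ → ℝ → ℝ) (CT : ℝ) (w : ℝ → ℝ)
    (wstep : ℕ → ℝ → ℝ → ℝ) (K1 K2 : ℕ → ℝ) (wt : ℕ → ℝ → ℝ)
    (hK : ∀ i, 1 ≤ i → i ≤ n - 1 → 0 < K1 i ∧ K1 i ≤ K2 i)
    -- single-step spanning relations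
    (hspan : ∀ i, 2 ≤ i → i ≤ n → ∀ k > 0,
      Cu (i - 1) k = ∫ k' in Ioi (0 : ℝ), wstep i k' k * Cu i k')
    (hCT : CT = ∫ k in Ioi (0 : ℝ), w k * Cu 1 k)
    -- modified weights
    (hwt1 : wt 1 = w)
    (hwt : ∀ i, 2 ≤ i → i ≤ n → ∀ k, wt i k =
      (∫ k' in Ioo (0 : ℝ) (K1 (i - 1)), wt (i - 1) k' * wstep i k k') +
        ∫ k' in Ioi (K2 (i - 1)), wt (i - 1) k' * wstep i k k')
    -- finiteness of all iterated integrals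
    (hint : ∀ i, 1 ≤ i → i ≤ n →
      IntegrableOn (fun k => wt i k * Cu i k) (Ioi (0 : ℝ)))
    (hint2 : ∀ i, 2 ≤ i → i ≤ n →
      IntegrableOn (fun p : ℝ × ℝ => wt (i - 1) p.1 * wstep i p.2 p.1 * Cu i p.2)
        ((Ioi (0 : ℝ)) ×ˢ (Ioi (0 : ℝ)))) :
    CT = (∑ i ∈ Finset.Icc 1 (n - 1), ∫ k in Ioc (K1 i) (K2 i), wt i k * Cu i k) +
      ∫ k in Ioi (0 : ℝ), wt n k * Cu n k := by
  suffices H : ∀ m, 1 ≤ m → m ≤ n →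
      CT = (∑ i ∈ Finset.Ico 1 m, ∫ k in Ioc (K1 i) (K2 i), wt i k * Cu i k) +
        ∫ k in Ioi (0 : ℝ), wt m k * Cu m k by
    obtain ⟨p, rfl⟩ : ∃ p, n = p + 1 := ⟨n - 1, by omega⟩
    simpa only [Nat.add_sub_cancel, Finset.Ico_add_one_right_eq_Icc]
      using H (p + 1) (by omega) le_rfl
  intro m hm
  induction m, hm using Nat.le_induction with
  | base => simpa [hwt1] using fun _ => hCT
  | succ m hm ih =>
    intro hmn
    obtain ⟨ha, hab⟩ := hK m hm (by omega)
    have hstep := integral_Ioi_eq_integral_Ioc_add_of_span ha hab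
      (by simpa only [Nat.add_sub_cancel] using hwt (m + 1) (by omega) hmn)
      (by simpa only [Nat.add_sub_cancel] using hspan (m + 1) (by omega) hmn)
      (hint m hm (by omega))
      (by simpa only [Nat.add_sub_cancel] using hint2 (m + 1) (by omega) hmn)
    rw [ih (by omega), hstep, Finset.sum_Ico_succ_top hm]
    ring

/-- **Iterated multi-maturity spanning (Corollary).** Maturities `u₁ > u₂ > … > u_n` are
indexed by `i = 1, …, n`; `Cu i k` is the time-`t` price of the call with strike `k` and
maturity `u_i`, `CT` the target call price. If each maturity-`u_{i-1}` call is spanned by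
maturity-`u_i` calls with weights `wstep i`, and the target is spanned by maturity-`u₁`
calls with weight `w`, then with modified weights `wt` (with `wt 1 = w` and `wt i`
obtained by integrating `wt (i-1)` against `wstep i` over the strikes excluded from
`[K1 (i-1), K2 (i-1)]`), the target decomposes over the bounded strike intervals plus a
final integral over all strikes at the shortest maturity. All functions are nonnegative
and all iterated integrals are finite. -/
theorem iterated_spanning
    (n : ℕ) (hn : 2 ≤ n)
    (Cu : ℕ → ℝ → ℝ) (CT : ℝ) (w : ℝ → ℝ)
    (wstep : ℕ → ℝ → ℝ → ℝ) (K1 K2 : ℕ → ℝ) (wt : ℕ → ℝ → ℝ)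
    (hK : ∀ i, 1 ≤ i → i ≤ n - 1 → 0 < K1 i ∧ K1 i ≤ K2 i)
    (hCu_nonneg : ∀ i k, 0 ≤ Cu i k)
    (hw_nonneg : ∀ k, 0 ≤ w k)
    (hwstep_nonneg : ∀ i k' k, 0 ≤ wstep i k' k)
    (hCu_meas : ∀ i, Measurable (Cu i))
    (hw_meas : Measurable w)
    (hwstep_meas : ∀ i, Measurable (fun p : ℝ × ℝ => wstep i p.1 p.2))
    (hwt_meas : ∀ i, Measurable (wt i))
    -- single-step spanning relations
    (hspan : ∀ i, 2 ≤ i → i ≤ n → ∀ k > 0,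
      Cu (i - 1) k = ∫ k' in Ioi (0 : ℝ), wstep i k' k * Cu i k')
    (hCT : CT = ∫ k in Ioi (0 : ℝ), w k * Cu 1 k)
    -- modified weights
    (hwt1 : wt 1 = w)
    (hwt : ∀ i, 2 ≤ i → i ≤ n → ∀ k, wt i k =
      (∫ k' in Ioo (0 : ℝ) (K1 (i - 1)), wt (i - 1) k' * wstep i k k') +
        ∫ k' in Ioi (K2 (i - 1)), wt (i - 1) k' * wstep i k k')
    -- finiteness of all iterated integrals
    (hint : ∀ i, 1 ≤ i → i ≤ n →
      IntegrableOn (fun k => wt i k * Cu i k) (Ioi (0 : ℝ)))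
    (hint2 : ∀ i, 2 ≤ i → i ≤ n →
      IntegrableOn (fun p : ℝ × ℝ => wt (i - 1) p.1 * wstep i p.2 p.1 * Cu i p.2)
        ((Ioi (0 : ℝ)) ×ˢ (Ioi (0 : ℝ)))) :
    CT = (∑ i ∈ Finset.Icc 1 (n - 1), ∫ k in Ioc (K1 i) (K2 i), wt i k * Cu i k) +
      ∫ k in Ioi (0 : ℝ), wt n k * Cu n k :=
  iterated_spanning_general n hn Cu CT w wstep K1 K2 wt hK hspan hCT hwt1 hwt hint hint2
end

section
/- Merton jump-diffusion call price as a Poisson mixture: if conditional on n jumps in [t,T] the price S_T is lognormal with rate r_n = r − λg + n(μ_j + σ_j²/2)/(T−t) and variance σ_n² = σ² + nσ_j²/(T−t), then C(S,t,K,T) = e^{−r(T−t)} Σ_{n=0}^∞ Pr(n) [S e^{(r_n−δ)(T−t)} N(d_{1n}) − K N(d_{1n} − σ_n√(T−t))], where Pr(n) = e^{−λ(T−t)} (λ(T−t))^n/n! and d_{1n} = (ln(S/K) + (r_n − δ + σ_n²/2)(T−t))/(σ_n√(T−t)), and this series converges absolutely for all S, K > 0. -/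
open MeasureTheory Set Real

noncomputable section

/-- standard normal cdf -/
def stdNormalCDF (y : ℝ) : ℝ :=
  ∫ s in Iic y, (Real.sqrt (2 * π))⁻¹ * Real.exp (-(s ^ 2) / 2)

lemma gauss_integrable {v : ℝ} (hv : 0 < v) (c : ℝ) :
    Integrable (fun y : ℝ => Real.exp (-(y - c) ^ 2 / (2 * v ^ 2))) := by
  have h : ∀ y : ℝ, Real.exp (-(y - c) ^ 2 / (2 * v ^ 2))
      = Real.exp (-(1 / (2 * v ^ 2)) * (y - c) ^ 2) := by
    intro y; congr 1; field_simp
  simp_rw [h]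
  exact (integrable_exp_neg_mul_sq (by positivity)).comp_sub_right c

lemma gauss_tail {v : ℝ} (hv : 0 < v) (c a : ℝ) :
    ∫ y in Ici a, (v * Real.sqrt (2 * π))⁻¹ * Real.exp (-(y - c) ^ 2 / (2 * v ^ 2))
      = stdNormalCDF ((c - a) / v) := by
  have himg : (fun u : ℝ => c - v * u) '' Iic ((c - a) / v) = Ici a := by
    ext x
    constructor
    · rintro ⟨u, hu, rfl⟩
      simp only [mem_Iic] at hu
      have : v * u ≤ v * ((c - a) / v) := by nlinarith
      rw [mul_div_cancel₀ _ hv.ne'] at this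
      simp only [mem_Ici]; linarith
    · intro hx
      refine ⟨(c - x) / v, ?_, ?_⟩
      · simp only [mem_Iic]
        have hax : a ≤ x := hx
        gcongr
      · field_simp; ring
  have hderiv : ∀ u ∈ Iic ((c - a) / v), HasDerivWithinAt (fun u : ℝ => c - v * u) (-v) (Iic ((c - a) / v)) u := by
    intro u _
    simpa using ((hasDerivAt_id u).const_mul v).const_sub c |>.hasDerivWithinAt
  have hinj : InjOn (fun u : ℝ => c - v * u) (Iic ((c - a) / v)) := by
    intro x _ y _ h
    simp only at h
    nlinarith [h]
  have := integral_image_eq_integral_abs_deriv_smul measurableSet_Iic hderiv hinj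
    (fun y => (v * Real.sqrt (2 * π))⁻¹ * Real.exp (-(y - c) ^ 2 / (2 * v ^ 2)))
  rw [himg] at this
  rw [this, stdNormalCDF]
  apply setIntegral_congr_fun measurableSet_Iic
  intro u _
  have h2 : -(c - v * u - c) ^ 2 / (2 * v ^ 2) = -(u ^ 2) / 2 := by
    field_simp; ring
  simp only [abs_neg, abs_of_pos hv, smul_eq_mul, h2]
  rw [mul_inv, ← mul_assoc, mul_inv_cancel_left₀ hv.ne']


lemma stdpdf_eq (s : ℝ) : Real.exp (-(s ^ 2) / 2) = Real.exp (-(1/2 : ℝ) * s ^ 2) := by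
  congr 1; ring

lemma stdpdf_integrable : Integrable (fun s : ℝ => (Real.sqrt (2 * π))⁻¹ * Real.exp (-(s ^ 2) / 2)) := by
  simp_rw [stdpdf_eq]
  exact (integrable_exp_neg_mul_sq (by norm_num)).const_mul _

lemma stdpdf_integral : ∫ s : ℝ, (Real.sqrt (2 * π))⁻¹ * Real.exp (-(s ^ 2) / 2) = 1 := by
  simp_rw [stdpdf_eq]
  rw [MeasureTheory.integral_const_mul, integral_gaussian]
  have : π / (1/2 : ℝ) = 2 * π := by ring
  rw [this, inv_mul_cancel₀]
  positivity

lemma stdNormalCDF_nonneg (y : ℝ) : 0 ≤ stdNormalCDF y := by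
  apply setIntegral_nonneg measurableSet_Iic
  intro s _; positivity

lemma stdNormalCDF_le_one (y : ℝ) : stdNormalCDF y ≤ 1 := by
  rw [← stdpdf_integral]
  apply setIntegral_le_integral stdpdf_integrable
  filter_upwards with s using by positivity


lemma lognormal_call {K m v : ℝ} (hK : 0 < K) (hv : 0 < v) :
    ∫ x in Ioi (0:ℝ), max (x - K) 0 *
        ((x * v * Real.sqrt (2 * π))⁻¹ * Real.exp (-(Real.log x - m) ^ 2 / (2 * v ^ 2)))
      = Real.exp (m + v ^ 2 / 2) * stdNormalCDF ((m + v ^ 2 - Real.log K) / v)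
        - K * stdNormalCDF ((m - Real.log K) / v) := by
  set c : ℝ → ℝ := fun y => (v * Real.sqrt (2 * π))⁻¹ * Real.exp (-(y - m) ^ 2 / (2 * v ^ 2)) with hc
  have sqrt2pi_pos : 0 < Real.sqrt (2 * π) := Real.sqrt_pos.mpr (by positivity)
  -- change of variables x = exp y
  have hIoi : Ioi (0:ℝ) = Real.exp '' univ := by rw [image_univ, Real.range_exp]
  have cov := integral_image_eq_integral_abs_deriv_smul (f' := Real.exp)
    MeasurableSet.univ (fun x _ => (Real.hasDerivAt_exp x).hasDerivWithinAt)
    (Real.exp_injective.injOn)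
    (fun x => max (x - K) 0 *
      ((x * v * Real.sqrt (2 * π))⁻¹ * Real.exp (-(Real.log x - m) ^ 2 / (2 * v ^ 2))))
  rw [hIoi, cov, Measure.restrict_univ]
  have step1 : ∀ y : ℝ, |Real.exp y| • (max (Real.exp y - K) 0 *
      ((Real.exp y * v * Real.sqrt (2 * π))⁻¹ *
        Real.exp (-(Real.log (Real.exp y) - m) ^ 2 / (2 * v ^ 2))))
      = max (Real.exp y - K) 0 * c y := by
    intro y
    have he : (0:ℝ) < Real.exp y := Real.exp_pos y
    rw [abs_of_pos he, smul_eq_mul, Real.log_exp, hc]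
    dsimp only
    field_simp
  simp_rw [step1]
  have step2 : ∀ y : ℝ, max (Real.exp y - K) 0 * c y
      = Set.indicator (Ici (Real.log K)) (fun y => (Real.exp y - K) * c y) y := by
    intro y
    by_cases hy : Real.log K ≤ y
    · rw [Set.indicator_of_mem (mem_Ici.mpr hy)]
      have : K ≤ Real.exp y := by
        calc K = Real.exp (Real.log K) := (Real.exp_log hK).symm
        _ ≤ Real.exp y := Real.exp_le_exp.mpr hy
      rw [max_eq_left (by linarith)]
    · rw [Set.indicator_of_notMem (by simpa using hy)]
      push_neg at hy
      have : Real.exp y < K := by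
        calc Real.exp y < Real.exp (Real.log K) := Real.exp_lt_exp.mpr hy
        _ = K := Real.exp_log hK
      rw [max_eq_right (by linarith), zero_mul]
  simp_rw [step2]
  rw [integral_indicator measurableSet_Ici]
  -- split the integral
  have key : ∀ y : ℝ, (Real.exp y - K) * c y
      = Real.exp (m + v ^ 2 / 2) *
          ((v * Real.sqrt (2 * π))⁻¹ * Real.exp (-(y - (m + v ^ 2)) ^ 2 / (2 * v ^ 2)))
        - K * c y := by
    intro y
    have hexp : Real.exp y * Real.exp (-(y - m) ^ 2 / (2 * v ^ 2))
        = Real.exp (m + v ^ 2 / 2) * Real.exp (-(y - (m + v ^ 2)) ^ 2 / (2 * v ^ 2)) := by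
      rw [← Real.exp_add, ← Real.exp_add]
      congr 1
      field_simp
      ring
    rw [hc]; dsimp only
    rw [sub_mul]
    congr 1
    rw [mul_comm (Real.exp y), mul_assoc, mul_comm (Real.exp (-(y - m) ^ 2 / (2 * v ^ 2))), hexp]
    ring
  simp_rw [key]
  have int1 : IntegrableOn (fun y => Real.exp (m + v ^ 2 / 2) *
      ((v * Real.sqrt (2 * π))⁻¹ * Real.exp (-(y - (m + v ^ 2)) ^ 2 / (2 * v ^ 2))))
      (Ici (Real.log K)) :=
    (((gauss_integrable hv (m + v ^ 2)).const_mul _).const_mul _).integrableOn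
  have int2 : IntegrableOn (fun y => K * c y) (Ici (Real.log K)) := by
    rw [hc]
    exact (((gauss_integrable hv m).const_mul _).const_mul _).integrableOn
  rw [integral_sub int1 int2]
  congr 1
  · rw [MeasureTheory.integral_const_mul, gauss_tail hv (m + v ^ 2) (Real.log K)]
  · simp only [hc]
    rw [MeasureTheory.integral_const_mul, gauss_tail hv m (Real.log K)]

set_option maxHeartbeats 1000000 in
/-- **Merton jump-diffusion call price as a Poisson mixture.** Let `τ = T - t > 0`,
`g = e^{μⱼ + σⱼ²/2} - 1`, `Pr n = e^{-λτ} (λτ)^n / n!`,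
`rₙ = r - λg + n(μⱼ + σⱼ²/2)/τ` and `σₙ² = σ² + nσⱼ²/τ`. If, conditional on `n` jumps,
`S_T` is lognormal with log-mean `ln S + (rₙ - δ - σₙ²/2)τ` and log-variance `σₙ²τ`
(so the conditional undiscounted expected payoff `En n` is a lognormal integral), and
the call price is the discounted Poisson mixture `C = e^{-rτ} ∑' n, Pr n * En n`, then
`C = e^{-rτ} ∑' n, Pr n * [S e^{(rₙ-δ)τ} N(d₁ₙ) - K N(d₁ₙ - σₙ√τ)]` with
`d₁ₙ = (ln(S/K) + (rₙ - δ + σₙ²/2)τ)/(σₙ√τ)`, and the series converges absolutely. -/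
theorem merton_poisson_mixture
    (S K r δ σ lam μj σj t T : ℝ)
    (hS : 0 < S) (hK : 0 < K) (hσ : 0 < σ) (hσj : 0 ≤ σj) (hlam : 0 < lam)
    (hτ : 0 < T - t)
    (g Pr rn σn d1n : ℕ → ℝ) (gj : ℝ) (En : ℕ → ℝ) (C : ℝ)
    (hgj : gj = Real.exp (μj + σj ^ 2 / 2) - 1)
    (hPr : ∀ n, Pr n = Real.exp (-lam * (T - t)) * (lam * (T - t)) ^ n / n.factorial)
    (hrn : ∀ n, rn n = r - lam * gj + n * (μj + σj ^ 2 / 2) / (T - t))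
    (hσn : ∀ n, σn n = Real.sqrt (σ ^ 2 + n * σj ^ 2 / (T - t)))
    (hd1n : ∀ n, d1n n =
      (Real.log (S / K) + (rn n - δ + (σn n) ^ 2 / 2) * (T - t)) /
        (σn n * Real.sqrt (T - t)))
    -- conditional on `n` jumps, `S_T` is lognormal with the stated parameters:
    (hEn : ∀ n, En n = ∫ x in Ioi (0 : ℝ),
      max (x - K) 0 *
        ((x * σn n * Real.sqrt (2 * π * (T - t)))⁻¹ *
          Real.exp (-(Real.log x -
            (Real.log S + (rn n - δ - (σn n) ^ 2 / 2) * (T - t))) ^ 2 /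
            (2 * (σn n) ^ 2 * (T - t)))))
    -- the number of jumps is Poisson, and the price is the discounted mixture (tower rule):
    (hC : C = Real.exp (-r * (T - t)) * ∑' n, Pr n * En n) :
    C = Real.exp (-r * (T - t)) * ∑' n, Pr n *
        (S * Real.exp ((rn n - δ) * (T - t)) * stdNormalCDF (d1n n) -
          K * stdNormalCDF (d1n n - σn n * Real.sqrt (T - t))) ∧
      Summable (fun n => |Pr n *
        (S * Real.exp ((rn n - δ) * (T - t)) * stdNormalCDF (d1n n) -
          K * stdNormalCDF (d1n n - σn n * Real.sqrt (T - t)))|) := by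
  set τ := T - t with hτdef
  clear_value τ
  have hsqτ : 0 < Real.sqrt τ := Real.sqrt_pos.mpr hτ
  have hσnpos : ∀ n : ℕ, 0 < σn n := by
    intro n
    rw [hσn n]
    apply Real.sqrt_pos.mpr
    have h1 : (0:ℝ) < σ ^ 2 := by positivity
    have h2 : (0:ℝ) ≤ (n : ℝ) * σj ^ 2 / τ := by positivity
    linarith
  have hσnsq : ∀ n : ℕ, (σn n) ^ 2 = σ ^ 2 + n * σj ^ 2 / τ := by
    intro n
    rw [hσn n]
    apply Real.sq_sqrt
    have h1 : (0:ℝ) < σ ^ 2 := by positivity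
    have h2 : (0:ℝ) ≤ (n : ℝ) * σj ^ 2 / τ := by positivity
    linarith
  -- En equals the Black–Scholes value
  have hEnBS : ∀ n, En n =
      S * Real.exp ((rn n - δ) * τ) * stdNormalCDF (d1n n) -
        K * stdNormalCDF (d1n n - σn n * Real.sqrt τ) := by
    intro n
    set vn : ℝ := σn n * Real.sqrt τ with hvn
    have hvpos : 0 < vn := mul_pos (hσnpos n) hsqτ
    have hvsq : vn ^ 2 = (σn n) ^ 2 * τ := by
      rw [hvn, mul_pow, Real.sq_sqrt hτ.le]
    set mn : ℝ := Real.log S + (rn n - δ - (σn n) ^ 2 / 2) * τ with hmn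
    have hint : En n = ∫ x in Ioi (0:ℝ), max (x - K) 0 *
        ((x * vn * Real.sqrt (2 * π))⁻¹ *
          Real.exp (-(Real.log x - mn) ^ 2 / (2 * vn ^ 2))) := by
      rw [hEn n]
      apply setIntegral_congr_fun measurableSet_Ioi
      intro x _
      dsimp only
      have e1 : x * σn n * Real.sqrt (2 * π * τ) = x * vn * Real.sqrt (2 * π) := by
        rw [Real.sqrt_mul (by positivity) τ, hvn]
        ring
      have e2 : 2 * (σn n) ^ 2 * τ = 2 * vn ^ 2 := by rw [hvsq]; ring
      rw [e1, e2]
    rw [hint, lognormal_call hK hvpos]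
    have hm2 : mn + vn ^ 2 / 2 = Real.log S + (rn n - δ) * τ := by
      rw [hmn, hvsq]; ring
    have hd1 : (mn + vn ^ 2 - Real.log K) / vn = d1n n := by
      rw [hd1n n, Real.log_div hS.ne' hK.ne', hmn, hvsq]
      congr 1
      ring
    have hd2 : (mn - Real.log K) / vn = d1n n - vn := by
      rw [hd1n n, Real.log_div hS.ne' hK.ne', hmn]
      rw [eq_sub_iff_add_eq, div_add' _ _ _ hvpos.ne']
      congr 1
      rw [← sq, hvsq]
      ring
    rw [hm2, hd1, hd2, Real.exp_add, Real.exp_log hS]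
  have hPrnonneg : ∀ n, 0 ≤ Pr n := by
    intro n
    rw [hPr n]
    positivity
  -- summability
  have hsum : Summable (fun n => |Pr n *
      (S * Real.exp ((rn n - δ) * τ) * stdNormalCDF (d1n n) -
        K * stdNormalCDF (d1n n - σn n * Real.sqrt τ))|) := by
    apply Summable.of_nonneg_of_le (fun n => abs_nonneg _)
      (f := fun n => (Real.exp (-lam * τ) * (S * Real.exp ((r - lam * gj - δ) * τ))) *
        ((lam * τ * Real.exp (μj + σj ^ 2 / 2)) ^ n / n.factorial)
        + (Real.exp (-lam * τ) * K) * ((lam * τ) ^ n / n.factorial))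
    · intro n
      have hA : Pr n * (S * Real.exp ((rn n - δ) * τ)) =
          (Real.exp (-lam * τ) * (S * Real.exp ((r - lam * gj - δ) * τ))) *
            ((lam * τ * Real.exp (μj + σj ^ 2 / 2)) ^ n / n.factorial) := by
        rw [hPr n, hrn n]
        have : (r - lam * gj + ↑n * (μj + σj ^ 2 / 2) / τ - δ) * τ
            = (r - lam * gj - δ) * τ + n * (μj + σj ^ 2 / 2) := by
          field_simp
          ring
        rw [this, Real.exp_add, Real.exp_nat_mul, mul_pow]
        ring
      have hNd1 := stdNormalCDF_nonneg (d1n n)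
      have hNd1' := stdNormalCDF_le_one (d1n n)
      have hNd2 := stdNormalCDF_nonneg (d1n n - σn n * Real.sqrt τ)
      have hNd2' := stdNormalCDF_le_one (d1n n - σn n * Real.sqrt τ)
      have hSe : (0:ℝ) ≤ S * Real.exp ((rn n - δ) * τ) := by positivity
      rw [abs_mul, abs_of_nonneg (hPrnonneg n), ← hA]
      have hB : Pr n * K = (Real.exp (-lam * τ) * K) * ((lam * τ) ^ n / n.factorial) := by
        rw [hPr n]; ring
      rw [← hB]
      have htri : |S * Real.exp ((rn n - δ) * τ) * stdNormalCDF (d1n n) -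
          K * stdNormalCDF (d1n n - σn n * Real.sqrt τ)|
          ≤ S * Real.exp ((rn n - δ) * τ) + K := by
        rw [abs_sub_le_iff]
        constructor <;> nlinarith
      calc Pr n * |S * Real.exp ((rn n - δ) * τ) * stdNormalCDF (d1n n) -
          K * stdNormalCDF (d1n n - σn n * Real.sqrt τ)|
          ≤ Pr n * (S * Real.exp ((rn n - δ) * τ) + K) := by
            exact mul_le_mul_of_nonneg_left htri (hPrnonneg n)
        _ = Pr n * (S * Real.exp ((rn n - δ) * τ)) + Pr n * K := by ring
    · exact ((Real.summable_pow_div_factorial _).mul_left _).add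
        ((Real.summable_pow_div_factorial _).mul_left _)
  refine ⟨?_, hsum⟩
  rw [hC]
  congr 1
  exact tsum_congr fun n => by rw [hEnBS n]

end
end
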